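/- arXiv:1804.00865 — 3 statements merged into one kernel-verified Lean document; each statement's English description precedes it below -/
import Mathlib

section
/- Let φ: ℕ → (0,1) and suppose φ is monotone decreasing. Then for every n ≥ 1 and every real t, |(1/2)(1+φ(n)) + (1/2)(1−φ(n))·e^{2πi·2^{−n}t}| ≤ 1 − 2(1−φ(1))·‖2^{−n}t‖². -/
/-!
With `p = (1 + φ n) / 2` and `q = (1 - φ n) / 2` one has
`|p + q e(x)|² = (p + q)² - 4pq sin²(πx) = 1 - (1 - φ(n)²) sin²(πx)`.
Jordan's inequality `|sin(πx)| ≥ 2‖x‖` and `1 - φ(n)² ≥ 1 - φ(n) ≥ 1 - φ(1)` bound this by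
`1 - 4(1 - φ(1))‖x‖² ≤ (1 - 2(1 - φ(1))‖x‖²)²`.
-/

open Real

theorem abs_sin_pi_mul_sub_round (x : ℝ) : |sin (π * (x - round x))| = |sin (π * x)| := by
  rw [mul_sub, mul_comm π (round x : ℝ), sin_sub_int_mul_pi, abs_mul, abs_neg_one_zpow, one_mul]

theorem two_mul_abs_sub_round_le_abs_sin_pi_mul (x : ℝ) : 2 * |x - round x| ≤ |sin (π * x)| := by
  have h := mul_abs_le_abs_sin (x := π * (x - round x)) (by
    rw [abs_mul, abs_of_pos pi_pos]; nlinarith [abs_sub_round x, pi_pos])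
  rwa [abs_mul, abs_of_pos pi_pos, ← mul_assoc, div_mul_cancel₀ _ pi_ne_zero,
    abs_sin_pi_mul_sub_round] at h

theorem sq_norm_add_mul_exp_two_pi_I_mul (a b x : ℝ) :
    ‖(a : ℂ) + b * Complex.exp (2 * π * Complex.I * x)‖ ^ 2
      = (a + b) ^ 2 - 4 * a * b * sin (π * x) ^ 2 := by
  rw [show 2 * (π : ℂ) * Complex.I * x = ((2 * (π * x) : ℝ) : ℂ) * Complex.I by push_cast; ring,
    Complex.exp_mul_I, ← Complex.ofReal_cos, ← Complex.ofReal_sin, Complex.sq_norm,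
    Complex.normSq_apply]
  simp only [Complex.add_re, Complex.add_im, Complex.mul_re, Complex.mul_im, Complex.ofReal_re,
    Complex.ofReal_im, Complex.I_re, Complex.I_im]
  rw [cos_two_mul, sin_two_mul, cos_sq']
  linear_combination 4 * b ^ 2 * sin (π * x) ^ 2 * sin_sq_add_cos_sq (π * x)

theorem coin_factor_bound (φ : ℕ → ℝ) (hφ : ∀ n, 0 < φ n ∧ φ n < 1)
    (hanti : ∀ n, φ (n + 1) ≤ φ n) (n : ℕ) (hn : 1 ≤ n) (t : ℝ) :
    ‖((((1 + φ n) / 2 : ℝ) : ℂ) +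
        (((1 - φ n) / 2 : ℝ) : ℂ) * Complex.exp (2 * (π : ℂ) * Complex.I * ((t / 2 ^ n : ℝ) : ℂ)))‖
      ≤ 1 - 2 * (1 - φ 1) * |t / 2 ^ n - round (t / 2 ^ n)| ^ 2 := by
  obtain ⟨hφn_pos, hφn_lt_one⟩ := hφ n
  have hφ1_pos := (hφ 1).1
  have hφn_le : φ n ≤ φ 1 := antitone_nat_of_succ_le hanti hn
  set x := t / 2 ^ n
  set y := |x - round x|
  have hy : y ≤ 1 / 2 := abs_sub_round x
  have hsin : (2 * y) ^ 2 ≤ sin (π * x) ^ 2 := by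
    simpa only [sq_abs] using pow_le_pow_left₀ (by positivity)
      (two_mul_abs_sub_round_le_abs_sin_pi_mul x) 2
  refine le_of_pow_le_pow_left₀ two_ne_zero (by nlinarith [abs_nonneg (x - round x)]) ?_
  calc _ = 1 - (1 - φ n ^ 2) * sin (π * x) ^ 2 := by
          rw [sq_norm_add_mul_exp_two_pi_I_mul]; ring
    _ ≤ 1 - (1 - φ 1) * (2 * y) ^ 2 := by
          gcongr <;> nlinarith
    _ ≤ (1 - 2 * (1 - φ 1) * y ^ 2) ^ 2 := by
          nlinarith [sq_nonneg ((1 - φ 1) * y ^ 2)]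
end

section
/- Let a ≥ 3 be an integer and φ: ℕ → (0,1). Define μ_a as the distribution of the random sum S = Σ_{n≥1} X_n·a^{−n}, where X_n are independent with P(X_n = 0) = (1+φ(n))/2 and P(X_n = 1) = (1−φ(n))/2. Then the Fourier transform satisfies |μ̂_a(a^k)|² ≥ (4/π²)·cos²(π/a) > 0 for every positive integer k; in particular μ̂_a(t) does not tend to 0 as |t| → ∞, i.e., μ_a is not a Rajchman measure. -/
/-!
Whatever `φ` is, each factor of the product has modulus at least `|cos (π θ)|`, since
`|(1 + p)/2 + (1 - p)/2 · e^{2πiθ}|² = cos² (πθ) + p² sin² (πθ)`.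
At `t = a^k` the first `k` angles `θ = a^{k-n-1}` are integers, and the remaining ones
give the factors `cos (π / a^{m+1})`, `m ≥ 0`. For `m ≥ 1` these dominate `cos (π / 2^{m+1})`,
and by Viète's identity `sin x = 2^M sin (x / 2^M) ∏_{m=1}^{M} cos (x / 2^m)` at `x = π/2`
the product of the latter is at least `2/π`.
So `|μ̂(a^k)| ≥ (2/π) cos (π/a)` uniformly in `k`.
-/

open Real MeasureTheory Filter
open Finset

theorem le_norm_tprod_of_forall_le_norm_prod_range {E : Type*} [NormedCommRing E]
    [NormOneClass E] {C : ℝ} (f : ℕ → E) (h : ∀ N, C ≤ ‖∏ i ∈ range N, f i‖) : C ≤ ‖∏' i, f i‖ := by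
  by_cases hf : Multipliable f
  · exact ge_of_tendsto hf.tendsto_prod_tprod_nat.norm (.of_forall h)
  · -- a non-multipliable product is `1` by convention, and `h 0` says `C ≤ ‖1‖`
    simpa [tprod_eq_one_of_not_multipliable hf] using h 0

theorem not_tendsto_cocompact_zero_of_le_norm {E : Type*} [NormedAddCommGroup E] {f : ℝ → E}
    {u : ℕ → ℝ} (hu : Tendsto u atTop atTop) {C : ℝ} (hC : 0 < C) (h : ∀ k, C ≤ ‖f (u k)‖) :
    ¬ Tendsto f (cocompact ℝ) (nhds 0) := by
  intro hf
  have hnorm : Tendsto (fun k => ‖f (u k)‖) atTop (nhds 0) := by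
    simpa using (hf.comp (hu.mono_right atTop_le_cocompact)).norm
  obtain ⟨k, hk⟩ := (hnorm.eventually_lt_const hC).exists
  exact (h k).not_gt hk

theorem norm_sq_two_point_factor (p θ : ℝ) :
    ‖(((1 + p) / 2 : ℝ) : ℂ) + (((1 - p) / 2 : ℝ) : ℂ) *
      Complex.exp (2 * (π : ℂ) * Complex.I * (θ : ℂ))‖ ^ 2 =
        cos (π * θ) ^ 2 + p ^ 2 * sin (π * θ) ^ 2 := by
  have hexp : 2 * (π : ℂ) * Complex.I * (θ : ℂ) = ((2 * (π * θ) : ℝ) : ℂ) * Complex.I := by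
    push_cast; ring
  rw [hexp, Complex.exp_mul_I, ← Complex.ofReal_cos, ← Complex.ofReal_sin, Complex.sq_norm,
    Complex.normSq_apply, cos_two_mul, sin_two_mul]
  simp only [Complex.add_re, Complex.add_im, Complex.mul_re, Complex.mul_im,
    Complex.ofReal_re, Complex.ofReal_im, Complex.I_re, Complex.I_im]
  linear_combination ((1 - p) ^ 2 * cos (π * θ) ^ 2 - p ^ 2) * sin_sq_add_cos_sq (π * θ)

theorem abs_cos_le_norm_two_point_factor (p θ : ℝ) :
    |cos (π * θ)| ≤ ‖(((1 + p) / 2 : ℝ) : ℂ) + (((1 - p) / 2 : ℝ) : ℂ) *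
      Complex.exp (2 * (π : ℂ) * Complex.I * (θ : ℂ))‖ := by
  refine abs_le_of_sq_le_sq ?_ (norm_nonneg _)
  rw [norm_sq_two_point_factor]
  exact le_add_of_nonneg_right (by positivity)

theorem sin_eq_two_pow_mul_sin_div_mul_prod_cos (x : ℝ) (M : ℕ) :
    sin x = 2 ^ M * sin (x / 2 ^ M) * ∏ m ∈ range M, cos (x / 2 ^ (m + 1)) := by
  induction M with
  | zero => simp
  | succ M ih =>
    have hhalf : x / 2 ^ M = 2 * (x / 2 ^ (M + 1)) := by field_simp; ring
    rw [ih, hhalf, sin_two_mul, prod_range_succ]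
    ring

theorem sin_le_mul_prod_cos_div_two_pow {x : ℝ} (hx₀ : 0 ≤ x) (hxπ : x ≤ π) (M : ℕ) :
    sin x ≤ x * ∏ m ∈ range M, cos (x / 2 ^ (m + 1)) := by
  have hprod : 0 ≤ ∏ m ∈ range M, cos (x / 2 ^ (m + 1)) := by
    refine prod_nonneg fun m _ => cos_nonneg_of_mem_Icc ⟨?_, ?_⟩
    · linarith [pi_pos, div_nonneg hx₀ (pow_nonneg zero_le_two (m + 1))]
    · have h2 : (2 : ℝ) ≤ 2 ^ (m + 1) := le_self_pow₀ one_le_two m.succ_ne_zero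
      rw [div_le_div_iff₀ (by positivity) two_pos]
      nlinarith [pi_pos]
  have hsin : 2 ^ M * sin (x / 2 ^ M) ≤ x := by
    have := sin_le (div_nonneg hx₀ (pow_nonneg zero_le_two M))
    calc 2 ^ M * sin (x / 2 ^ M) ≤ 2 ^ M * (x / 2 ^ M) := by gcongr
      _ = x := by field_simp
  rw [sin_eq_two_pow_mul_sin_div_mul_prod_cos x M]
  exact mul_le_mul_of_nonneg_right hsin hprod

theorem cos_pi_div_nonneg {b : ℝ} (hb : 2 ≤ b) : 0 ≤ cos (π / b) := by
  have hb₀ : 0 < b := by linarith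
  refine cos_nonneg_of_mem_Icc ⟨by linarith [pi_pos, div_pos pi_pos hb₀], ?_⟩
  rw [div_le_div_iff₀ hb₀ two_pos]
  nlinarith [pi_pos]

theorem cos_pi_div_pos {b : ℝ} (hb : 2 < b) : 0 < cos (π / b) := by
  have hb₀ : 0 < b := by linarith
  refine cos_pos_of_mem_Ioo ⟨by linarith [pi_pos, div_pos pi_pos hb₀], ?_⟩
  rw [div_lt_div_iff₀ hb₀ two_pos]
  nlinarith [pi_pos]

theorem cos_pi_div_le_cos_pi_div {b c : ℝ} (hb : 1 ≤ b) (hbc : b ≤ c) :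
    cos (π / b) ≤ cos (π / c) :=
  cos_le_cos_of_nonneg_of_le_pi (div_nonneg pi_pos.le (by linarith)) (div_le_self pi_pos.le hb)
    (div_le_div_of_nonneg_left pi_pos.le (by linarith) hbc)

theorem two_div_pi_le_prod_cos {a : ℝ} (ha : 2 ≤ a) (M : ℕ) :
    2 / π ≤ ∏ m ∈ range M, cos (π / a ^ (m + 2)) := by
  have hviete := sin_le_mul_prod_cos_div_two_pow (by positivity) (half_le_self pi_pos.le) M
  rw [sin_pi_div_two] at hviete
  simp only [div_div, ← pow_succ'] at hviete
  calc 2 / π ≤ ∏ m ∈ range M, cos (π / 2 ^ (m + 2)) := by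
        rw [div_le_iff₀ pi_pos]; linarith
    _ ≤ ∏ m ∈ range M, cos (π / a ^ (m + 2)) := by
        have h2 (m : ℕ) : (2 : ℝ) ≤ 2 ^ (m + 2) := le_self_pow₀ one_le_two (by omega)
        refine prod_le_prod (fun m _ => cos_pi_div_nonneg (h2 m)) (fun m _ => ?_)
        exact cos_pi_div_le_cos_pi_div (by linarith [h2 m]) (pow_le_pow_left₀ two_pos.le ha _)

theorem two_div_pi_mul_cos_le_prod_cos {a : ℝ} (ha : 2 ≤ a) (M : ℕ) :
    2 / π * cos (π / a) ≤ ∏ m ∈ range M, cos (π / a ^ (m + 1)) := by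
  cases M with
  | zero =>
    have h2π : 2 / π ≤ 1 := (div_le_one pi_pos).2 (by linarith [pi_gt_three])
    simpa using mul_le_one₀ h2π (cos_pi_div_nonneg ha) (cos_le_one _)
  | succ M =>
    rw [prod_range_succ', zero_add, pow_one]
    exact mul_le_mul_of_nonneg_right (two_div_pi_le_prod_cos ha M) (cos_pi_div_nonneg ha)

theorem two_div_pi_mul_cos_le_prod_abs_cos {a : ℕ} (ha : 2 ≤ a) (k N : ℕ) :
    2 / π * cos (π / a) ≤ ∏ n ∈ range N, |cos (π * ((a : ℝ) ^ k / (a : ℝ) ^ (n + 1)))| := by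
  have ha' : (2 : ℝ) ≤ a := by exact_mod_cast ha
  have ha₀ : (a : ℝ) ≠ 0 := by positivity
  set g : ℕ → ℝ := fun n => |cos (π * ((a : ℝ) ^ k / (a : ℝ) ^ (n + 1)))| with hg
  have hhead (n : ℕ) (hn : n < k) : g n = 1 := by
    have hnat : (a : ℝ) ^ k / (a : ℝ) ^ (n + 1) = ((a ^ (k - (n + 1)) : ℕ) : ℝ) := by
      rw [div_eq_iff (pow_ne_zero _ ha₀), Nat.cast_pow, ← pow_add]
      congr 1
      omega
    simp only [hg, hnat, mul_comm π, cos_nat_mul_pi, abs_pow, abs_neg, abs_one, one_pow]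
  have htail (m : ℕ) : g (k + m) = cos (π / (a : ℝ) ^ (m + 1)) := by
    have hpow : (a : ℝ) ^ k / (a : ℝ) ^ (k + m + 1) = 1 / (a : ℝ) ^ (m + 1) := by
      rw [add_assoc, pow_add, div_mul_cancel_left₀ (pow_ne_zero _ ha₀), one_div]
    have hcos := cos_pi_div_nonneg (ha'.trans (le_self_pow₀ (by linarith) m.succ_ne_zero))
    simp only [hg, hpow, mul_one_div, abs_of_nonneg hcos]
  calc 2 / π * cos (π / a) ≤ ∏ m ∈ range N, cos (π / (a : ℝ) ^ (m + 1)) :=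
        two_div_pi_mul_cos_le_prod_cos ha' N
    -- prepend the `k` trivial factors, then drop the last `k`: all factors lie in `[0, 1]`
    _ = ∏ n ∈ range (k + N), g n := by
        rw [prod_range_add, prod_eq_one fun n hn => hhead n (mem_range.1 hn), one_mul]
        exact prod_congr rfl fun m _ => (htail m).symm
    _ ≤ ∏ n ∈ range N, g n :=
        prod_le_prod_of_subset_of_le_one (range_subset_range.2 (Nat.le_add_left N k))
          (fun _ _ => abs_nonneg _) (fun _ _ _ => abs_cos_le_one _)

theorem not_rajchman_base_ge_three_general (a : ℕ) (ha : 3 ≤ a) (φ : ℕ → ℝ)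
    (μ : Measure ℝ)
    (hμ : ∀ t : ℝ, (∫ x : ℝ, Complex.exp (2 * (π : ℂ) * Complex.I * (t : ℂ) * (x : ℂ)) ∂μ)
      = ∏' n : ℕ, ((((1 + φ (n + 1)) / 2 : ℝ) : ℂ) +
          (((1 - φ (n + 1)) / 2 : ℝ) : ℂ) *
            Complex.exp (2 * (π : ℂ) * Complex.I * ((t / (a : ℝ) ^ (n + 1) : ℝ) : ℂ)))) :
    (∀ k : ℕ, 1 ≤ k →
        (4 / π ^ 2) * Real.cos (π / a) ^ 2 ≤
          ‖(∫ x : ℝ, Complex.exp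
            (2 * (π : ℂ) * Complex.I * (((a : ℝ) ^ k : ℝ) : ℂ) * (x : ℂ)) ∂μ)‖ ^ 2) ∧
      0 < (4 / π ^ 2) * Real.cos (π / a) ^ 2 ∧
      ¬ Tendsto (fun t : ℝ => ∫ x : ℝ,
          Complex.exp (2 * (π : ℂ) * Complex.I * (t : ℂ) * (x : ℂ)) ∂μ)
        (cocompact ℝ) (nhds 0) := by
  set C := 2 / π * cos (π / a)
  have hC : 4 / π ^ 2 * cos (π / a) ^ 2 = C ^ 2 := by ring
  have hC₀ : 0 < C := mul_pos (by positivity) (cos_pi_div_pos (by exact_mod_cast ha))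
  have hbound (k : ℕ) : C ≤ ‖∫ x : ℝ, Complex.exp
      (2 * (π : ℂ) * Complex.I * (((a : ℝ) ^ k : ℝ) : ℂ) * (x : ℂ)) ∂μ‖ := by
    rw [hμ]
    refine le_norm_tprod_of_forall_le_norm_prod_range _ fun N => ?_
    rw [norm_prod]
    exact (two_div_pi_mul_cos_le_prod_abs_cos (by omega) k N).trans
      (prod_le_prod (fun _ _ => abs_nonneg _) fun n _ => abs_cos_le_norm_two_point_factor _ _)
  refine ⟨fun k _ => hC ▸ pow_le_pow_left₀ hC₀.le (hbound k) 2, hC ▸ pow_pos hC₀ 2, ?_⟩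
  exact not_tendsto_cocompact_zero_of_le_norm
    (tendsto_pow_atTop_atTop_of_one_lt (by exact_mod_cast (by omega : 1 < a))) hC₀ hbound

theorem not_rajchman_base_ge_three (a : ℕ) (ha : 3 ≤ a) (φ : ℕ → ℝ)
    (hφ : ∀ n, 0 < φ n ∧ φ n < 1)
    (μ : Measure ℝ) [IsProbabilityMeasure μ]
    (hμ : ∀ t : ℝ, (∫ x : ℝ, Complex.exp (2 * (π : ℂ) * Complex.I * (t : ℂ) * (x : ℂ)) ∂μ)
      = ∏' n : ℕ, ((((1 + φ (n + 1)) / 2 : ℝ) : ℂ) +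
          (((1 - φ (n + 1)) / 2 : ℝ) : ℂ) *
            Complex.exp (2 * (π : ℂ) * Complex.I * ((t / (a : ℝ) ^ (n + 1) : ℝ) : ℂ)))) :
    (∀ k : ℕ, 1 ≤ k →
        (4 / π ^ 2) * Real.cos (π / a) ^ 2 ≤
          ‖(∫ x : ℝ, Complex.exp
            (2 * (π : ℂ) * Complex.I * (((a : ℝ) ^ k : ℝ) : ℂ) * (x : ℂ)) ∂μ)‖ ^ 2) ∧
      0 < (4 / π ^ 2) * Real.cos (π / a) ^ 2 ∧
      ¬ Tendsto (fun t : ℝ => ∫ x : ℝ,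
          Complex.exp (2 * (π : ℂ) * Complex.I * (t : ℂ) * (x : ℂ)) ∂μ)
        (cocompact ℝ) (nhds 0) :=
  not_rajchman_base_ge_three_general a ha φ μ hμ
end

section
/- Let φ: ℕ → (0,1) be non-increasing and let μ be the distribution of Σ_{n≥1} X_n·2^{−n} with X_n independent, P(X_n=0) = (1+φ(n))/2, P(X_n=1) = (1−φ(n))/2. Then for every m ≥ 1, |μ̂(2^m)|² ≥ (4/π²)·φ²(m+1). In particular, the Fourier decay rate of μ along powers of 2 is at least (2/π)·φ(m+1). -/
open Real MeasureTheory

/-!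
The transform `μ̂(t)` is the product over `n ≥ 1` of the Fourier transforms of the digits,
`(1 + φ n)/2 + (1 - φ n)/2 · e^{2πi t/2^n}`, whose squared modulus is
`φ(n)² sin²(πt/2^n) + cos²(πt/2^n)`. At `t = 2^m` the factors with `n ≤ m` equal `1`, the factor
`n = m + 1` equals `φ(m+1)`, and the remaining ones have modulus at least `cos(π/2^(j+2))`,
`j ≥ 0`. By Viète's identity `sin x = 2^N sin(x/2^N) ∏_{j<N} cos(x/2^(j+1))` at `x = π/2`,
together with `sin y ≤ y`, every partial product of these cosines is at least `2/π`.
-/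

lemma sin_eq_two_pow_mul_sin_mul_prod_cos (x : ℝ) (N : ℕ) :
    sin x = 2 ^ N * sin (x / 2 ^ N) * ∏ j ∈ Finset.range N, cos (x / 2 ^ (j + 1)) := by
  induction N with
  | zero => simp
  | succ N ih =>
    have h : x / 2 ^ N = 2 * (x / 2 ^ (N + 1)) := by rw [pow_succ]; field_simp
    rw [ih, h, sin_two_mul, Finset.prod_range_succ, pow_succ]
    ring

lemma two_div_pi_le_prod_cos_pi_div_two_pow (N : ℕ) :
    2 / π ≤ ∏ j ∈ Finset.range N, cos (π / 2 ^ (j + 2)) := by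
  have hviete := sin_eq_two_pow_mul_sin_mul_prod_cos (π / 2) N
  simp only [sin_pi_div_two, div_div, ← pow_succ', add_assoc, one_add_one_eq_two] at hviete
  have hpos : 0 < 2 ^ N * sin (π / 2 ^ (N + 1)) := mul_pos (by positivity) <|
    sin_pos_of_pos_of_lt_pi (by positivity)
      (div_lt_self pi_pos (one_lt_pow₀ one_lt_two N.succ_ne_zero))
  have hle : 2 ^ N * sin (π / 2 ^ (N + 1)) ≤ π / 2 :=
    calc 2 ^ N * sin (π / 2 ^ (N + 1)) ≤ 2 ^ N * (π / 2 ^ (N + 1)) := by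
          gcongr; exact sin_le (by positivity)
      _ = π / 2 := by rw [pow_succ]; field_simp
  rw [eq_comm, mul_comm, ← eq_div_iff hpos.ne'] at hviete
  rw [hviete, div_le_div_iff₀ pi_pos hpos]
  linarith

lemma mul_norm_le_norm_tprod {E : Type*} [SeminormedCommRing E] [NormMulClass E]
    [NormOneClass E] {c : ℕ → E} {m : ℕ} {a : ℝ} (hone : ∀ n < m, c n = 1)
    (htail : ∀ N, a ≤ ∏ j ∈ Finset.range N, ‖c (m + 1 + j)‖)
    -- covers the junk value `∏' n, c n = 1` when `c` is not multipliable
    (hle_one : a * ‖c m‖ ≤ 1) :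
    a * ‖c m‖ ≤ ‖∏' n, c n‖ := by
  by_cases hc : Multipliable c
  · have hpartial := hc.hasProd.norm.tendsto_prod_nat.comp (Filter.tendsto_add_atTop_nat (m + 1))
    refine ge_of_tendsto' hpartial fun N => ?_
    have hhead : ∏ n ∈ Finset.range m, ‖c n‖ = 1 :=
      Finset.prod_eq_one fun n hn => by rw [hone n (Finset.mem_range.mp hn), norm_one]
    rw [Function.comp_apply, add_comm N, Finset.prod_range_add, Finset.prod_range_succ, hhead,
      one_mul, mul_comm a]
    exact mul_le_mul_of_nonneg_left (htail N) (norm_nonneg _)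
  · rwa [tprod_eq_one_of_not_multipliable hc, norm_one]

noncomputable def bernoulliFourier (p t : ℝ) : ℂ :=
  (((1 + p) / 2 : ℝ) : ℂ) +
    (((1 - p) / 2 : ℝ) : ℂ) * Complex.exp (2 * (π : ℂ) * Complex.I * (t : ℂ))

lemma bernoulliFourier_intCast (p : ℝ) (k : ℤ) : bernoulliFourier p k = 1 := by
  have : 2 * (π : ℂ) * Complex.I * ((k : ℝ) : ℂ) = k * (2 * π * Complex.I) := by push_cast; ring
  rw [bernoulliFourier, this, Complex.exp_int_mul_two_pi_mul_I]
  push_cast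
  ring

lemma bernoulliFourier_half (p : ℝ) : bernoulliFourier p (1 / 2) = p := by
  have : 2 * (π : ℂ) * Complex.I * ((1 / 2 : ℝ) : ℂ) = π * Complex.I := by push_cast; ring
  rw [bernoulliFourier, this, Complex.exp_pi_mul_I]
  push_cast
  ring

lemma norm_bernoulliFourier_sq (p t : ℝ) :
    ‖bernoulliFourier p t‖ ^ 2 = p ^ 2 * sin (π * t) ^ 2 + cos (π * t) ^ 2 := by
  have hexp : Complex.exp (2 * (π : ℂ) * Complex.I * (t : ℂ)) =
      ((cos (2 * (π * t)) : ℝ) : ℂ) + ((sin (2 * (π * t)) : ℝ) : ℂ) * Complex.I := by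
    rw [← Complex.exp_ofReal_mul_I]; push_cast; ring_nf
  have hre_im : bernoulliFourier p t = ((((1 + p) / 2 + (1 - p) / 2 * cos (2 * (π * t))) : ℝ) : ℂ)
      + (((1 - p) / 2 * sin (2 * (π * t)) : ℝ) : ℂ) * Complex.I := by
    rw [bernoulliFourier, hexp]; push_cast; ring
  rw [hre_im, Complex.sq_norm, Complex.normSq_add_mul_I, cos_two_mul', sin_two_mul]
  linear_combination (((1 - p) / 2) ^ 2 * (sin (π * t) ^ 2 + cos (π * t) ^ 2) - ((1 + p) / 2) ^ 2)
    * sin_sq_add_cos_sq (π * t)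

lemma abs_cos_le_norm_bernoulliFourier (p t : ℝ) : |cos (π * t)| ≤ ‖bernoulliFourier p t‖ := by
  rw [← abs_norm, ← sq_le_sq, norm_bernoulliFourier_sq]
  nlinarith [sq_nonneg (p * sin (π * t))]

lemma bernoulliFourier_two_pow_div_of_lt (p : ℝ) {m n : ℕ} (h : n < m) :
    bernoulliFourier p (2 ^ m / 2 ^ (n + 1)) = 1 := by
  rw [div_eq_mul_inv, ← pow_sub₀ _ two_ne_zero h]
  exact_mod_cast bernoulliFourier_intCast p (2 ^ (m - (n + 1)))

lemma bernoulliFourier_two_pow_div_self (p : ℝ) (m : ℕ) :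
    bernoulliFourier p (2 ^ m / 2 ^ (m + 1)) = p := by
  rw [pow_succ, div_mul_cancel_left₀ (by positivity), ← one_div, bernoulliFourier_half]

lemma abs_cos_pi_div_two_pow_le_norm_bernoulliFourier (p : ℝ) (m j : ℕ) :
    |cos (π / 2 ^ (j + 2))| ≤ ‖bernoulliFourier p (2 ^ m / 2 ^ (m + 1 + j + 1))‖ := by
  have ht : (2 : ℝ) ^ m / 2 ^ (m + 1 + j + 1) = 1 / 2 ^ (j + 2) := by
    rw [show m + 1 + j + 1 = m + (j + 2) by ring, pow_add]; field_simp
  simpa only [ht, mul_one_div] using abs_cos_le_norm_bernoulliFourier p (1 / 2 ^ (j + 2))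

lemma two_div_pi_mul_abs_le_norm_tprod_bernoulliFourier (p : ℕ → ℝ) (m : ℕ) (hp : |p m| ≤ 1) :
    2 / π * |p m| ≤ ‖∏' n, bernoulliFourier (p n) (2 ^ m / 2 ^ (n + 1))‖ := by
  have hnorm : ‖bernoulliFourier (p m) (2 ^ m / 2 ^ (m + 1))‖ = |p m| := by
    rw [bernoulliFourier_two_pow_div_self, Complex.norm_real, Real.norm_eq_abs]
  rw [← hnorm]
  refine mul_norm_le_norm_tprod (fun n hn => bernoulliFourier_two_pow_div_of_lt _ hn)
    (fun N => ?_) ?_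
  · calc 2 / π ≤ ∏ j ∈ Finset.range N, cos (π / 2 ^ (j + 2)) :=
          two_div_pi_le_prod_cos_pi_div_two_pow N
      _ ≤ ∏ j ∈ Finset.range N, |cos (π / 2 ^ (j + 2))| :=
          (le_abs_self _).trans (Finset.abs_prod _ _).le
      _ ≤ _ := Finset.prod_le_prod (fun _ _ => abs_nonneg _)
          fun j _ => abs_cos_pi_div_two_pow_le_norm_bernoulliFourier _ m j
  · rw [hnorm]
    exact mul_le_one₀ ((div_le_one pi_pos).mpr (by linarith [pi_gt_three])) (abs_nonneg _) hp

theorem fourier_lower_bound_along_powers_of_two_general (φ : ℕ → ℝ)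
    (hφ : ∀ n, 0 < φ n ∧ φ n < 1)
    (μ : Measure ℝ)
    (hμ : ∀ t : ℝ, (∫ x : ℝ, Complex.exp (2 * (π : ℂ) * Complex.I * (t : ℂ) * (x : ℂ)) ∂μ)
      = ∏' n : ℕ, ((((1 + φ (n + 1)) / 2 : ℝ) : ℂ) +
          (((1 - φ (n + 1)) / 2 : ℝ) : ℂ) *
            Complex.exp (2 * (π : ℂ) * Complex.I * ((t / 2 ^ (n + 1) : ℝ) : ℂ)))) :
    ∀ m : ℕ, 1 ≤ m →
      (4 / π ^ 2) * φ (m + 1) ^ 2 ≤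
        ‖(∫ x : ℝ, Complex.exp
          (2 * (π : ℂ) * Complex.I * (((2 : ℝ) ^ m : ℝ) : ℂ) * (x : ℂ)) ∂μ)‖ ^ 2 := by
  intro m _
  have hφm : |φ (m + 1)| ≤ 1 := abs_le.mpr ⟨by linarith [hφ (m + 1)], (hφ (m + 1)).2.le⟩
  have hbound := two_div_pi_mul_abs_le_norm_tprod_bernoulliFourier (fun n => φ (n + 1)) m hφm
  rw [hμ]
  calc 4 / π ^ 2 * φ (m + 1) ^ 2 = (2 / π * |φ (m + 1)|) ^ 2 := by rw [mul_pow, sq_abs]; ring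
    _ ≤ _ := pow_le_pow_left₀ (by positivity) hbound 2

theorem fourier_lower_bound_along_powers_of_two (φ : ℕ → ℝ)
    (hφ : ∀ n, 0 < φ n ∧ φ n < 1) (hanti : ∀ n, φ (n + 1) ≤ φ n)
    (μ : Measure ℝ) [IsProbabilityMeasure μ]
    (hμ : ∀ t : ℝ, (∫ x : ℝ, Complex.exp (2 * (π : ℂ) * Complex.I * (t : ℂ) * (x : ℂ)) ∂μ)
      = ∏' n : ℕ, ((((1 + φ (n + 1)) / 2 : ℝ) : ℂ) +
          (((1 - φ (n + 1)) / 2 : ℝ) : ℂ) *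
            Complex.exp (2 * (π : ℂ) * Complex.I * ((t / 2 ^ (n + 1) : ℝ) : ℂ)))) :
    ∀ m : ℕ, 1 ≤ m →
      (4 / π ^ 2) * φ (m + 1) ^ 2 ≤
        ‖(∫ x : ℝ, Complex.exp
          (2 * (π : ℂ) * Complex.I * (((2 : ℝ) ^ m : ℝ) : ℂ) * (x : ℂ)) ∂μ)‖ ^ 2 :=
  fourier_lower_bound_along_powers_of_two_general φ hφ μ hμ
end
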